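/- Let M1 and M2 be simple matroids on E1 and E2 with E1 ∩ E2 = {p}, where p is not a coloop of M1 or of M2. Let M = P_p(M1,M2) and M' = M \ p. If (H1', H2', H3') is a modular triple of hyperplanes of M', then (cl_M(H1'), cl_M(H2'), cl_M(H3')) is a modular triple of hyperplanes of M, where cl_M denotes the closure operator of M. -/

import Mathlib

open Matroid Set

variable {α : Type*}

/-- The rank of a set `X` in a matroid `M`: the supremum of the cardinalities of the
independent subsets of `X`. -/
noncomputable def mRk (M : Matroid α) (X : Set α) : ℕ :=
  sSup {n : ℕ | ∃ I, M.Indep I ∧ I ⊆ X ∧ I.ncard = n}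

/-- The rank of a matroid `M`. -/
noncomputable def mRank (M : Matroid α) : ℕ := mRk M M.E

/-- `T` is a modular flat of `M`: `T` is a flat and
`r(T) + r(F) = r(T ∩ F) + r(T ∪ F)` holds for every flat `F` of `M`. -/
def IsModFlat (M : Matroid α) (T : Set α) : Prop :=
  M.IsFlat T ∧ ∀ F, M.IsFlat F → mRk M T + mRk M F = mRk M (T ∩ F) + mRk M (T ∪ F)

/-- `H` is a hyperplane of `M`: a flat of rank `r(M) - 1`. -/
def IsHyp (M : Matroid α) (H : Set α) : Prop :=
  M.IsFlat H ∧ mRk M H + 1 = mRank M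

/-- `F` is a corank-2 flat of `M`: a flat of rank `r(M) - 2`. -/
def IsCr2Flat (M : Matroid α) (F : Set α) : Prop :=
  M.IsFlat F ∧ mRk M F + 2 = mRank M

/-- `F` is a corank-3 flat of `M`: a flat of rank `r(M) - 3`. -/
def IsCr3Flat (M : Matroid α) (F : Set α) : Prop :=
  M.IsFlat F ∧ mRk M F + 3 = mRank M

/-- `(H1, H2, H3)` is a modular triple of hyperplanes of `M`: the three sets are
hyperplanes, `F = H1 ∩ H2 ∩ H3` is a corank-2 flat, and `Hi ∩ Hj = F` for all `i ≠ j`. -/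
def ModTriple (M : Matroid α) (H1 H2 H3 : Set α) : Prop :=
  IsHyp M H1 ∧ IsHyp M H2 ∧ IsHyp M H3 ∧
  IsCr2Flat M (H1 ∩ H2 ∩ H3) ∧
  H1 ∩ H2 = H1 ∩ H2 ∩ H3 ∧ H1 ∩ H3 = H1 ∩ H2 ∩ H3 ∧ H2 ∩ H3 = H1 ∩ H2 ∩ H3

/-- `M` is the generalized parallel connection of `M1` and `M2`: its ground set is
`M1.E ∪ M2.E`, and its flats are exactly the sets `F ⊆ M1.E ∪ M2.E` such that
`F ∩ M1.E` is a flat of `M1` and `F ∩ M2.E` is a flat of `M2`. -/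
def IsGPC (M1 M2 M : Matroid α) : Prop :=
  M.E = M1.E ∪ M2.E ∧
    ∀ F : Set α, M.IsFlat F ↔ F ⊆ M1.E ∪ M2.E ∧ M1.IsFlat (F ∩ M1.E) ∧ M2.IsFlat (F ∩ M2.E)

/-- The deletion `M \ D` of a set `D` from `M`. -/
def mDelete (M : Matroid α) (D : Set α) : Matroid α := M ↾ (M.E \ D)

/-- The contraction `M / C`, obtained via duality as `(M✶ \ C)✶`. -/
def mContract (M : Matroid α) (C : Set α) : Matroid α := (M✶ ↾ (M.E \ C))✶

/-- `N` is a minor of `M`: `N` is obtained from `M` by a contraction followed by a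
deletion. -/
def MinorOf (N M : Matroid α) : Prop :=
  ∃ C D : Set α, C ⊆ M.E ∧ D ⊆ M.E ∧ Disjoint C D ∧
    N = (mContract M C) ↾ ((M.E \ C) \ D)

/-- `C` is a circuit of `M`: a minimal dependent subset of the ground set. -/
def MCircuit (M : Matroid α) (C : Set α) : Prop :=
  C ⊆ M.E ∧ ¬ M.Indep C ∧ ∀ D ⊂ C, M.Indep D

/-- `e` is a loop of `M`. -/
def MLoop (M : Matroid α) (e : α) : Prop := e ∈ M.E ∧ ¬ M.Indep {e}

/-- `e` is a coloop of `M`: an element of the ground set lying in every base. -/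
def MColoop (M : Matroid α) (e : α) : Prop := e ∈ M.E ∧ ∀ B, M.IsBase B → e ∈ B

/-- `M` is simple: every subset of the ground set with at most two elements is
independent; equivalently, `M` has no loops and no two-element circuits. -/
def MSimple (M : Matroid α) : Prop := ∀ S ⊆ M.E, S.ncard ≤ 2 → M.Indep S

/-- `X` is co-independent in `M`: the complement `M.E \ X` is spanning. -/
def MCoindep (M : Matroid α) (X : Set α) : Prop := M.Spanning (M.E \ X)

/-- The connected component of `M` containing `e`: the set of `f` in the ground set with
`e = f` or some circuit containing both `e` and `f`. -/
def MComponentOf (M : Matroid α) (e : α) : Set α :=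
  {f | f ∈ M.E ∧ (e = f ∨ ∃ C, MCircuit M C ∧ e ∈ C ∧ f ∈ C)}

/-- `K` is a connected component of `M`. -/
def MComponent (M : Matroid α) (K : Set α) : Prop :=
  ∃ e ∈ M.E, K = MComponentOf M e

/-- The restriction `M|X` is (isomorphic to) the rank-2 uniform matroid `U_{2,n}`:
`X` is an `n`-element subset of the ground set and a subset of `X` is independent
exactly when it has at most 2 elements. -/
def RestrIsU2 (M : Matroid α) (X : Set α) (n : ℕ) : Prop :=
  X ⊆ M.E ∧ X.ncard = n ∧ ∀ S ⊆ X, (M.Indep S ↔ S.ncard ≤ 2)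

/-- `Θ` is a copy of the matroid `Θ_n`, with `X = {x 1, …, x n}` and `Y = {y 1, …, y n}`
disjoint, whose bases are exactly `Y`, the sets `(Y \ {y i}) ∪ {x j}` for `i ≠ j`, and
the sets `(Y \ Y') ∪ X'` with `Y' ⊆ Y`, `X' ⊆ X`, `|Y'| = |X'| = 2`. -/
def IsTheta (n : ℕ) (x y : Fin n → α) (Θ : Matroid α) : Prop :=
  Function.Injective x ∧ Function.Injective y ∧ (∀ i j, x i ≠ y j) ∧
  Θ.E = Set.range x ∪ Set.range y ∧
  ∀ B : Set α, Θ.IsBase B ↔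
    (B = Set.range y ∨
    (∃ i j, i ≠ j ∧ B = (Set.range y \ {y i}) ∪ {x j}) ∨
    (∃ P Q : Set (Fin n), P.ncard = 2 ∧ Q.ncard = 2 ∧
      B = (Set.range y \ (y '' P)) ∪ x '' Q))

/-- `M` is representable over the field `K`: there is a map from the ground set to a
`K`-vector space under which a subset of the ground set is independent in `M` exactly
when its image (as a family) is linearly independent. -/
def RepOver (K : Type*) [Field K] {α : Type*} (M : Matroid α) : Prop :=
  ∃ (V : Type) (_ : AddCommGroup V) (_ : Module K V) (φ : α → V),
    ∀ I ⊆ M.E, (M.Indep I ↔ LinearIndependent K (fun e : I => φ e.1))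

section AuxLemmas

variable {M : Matroid α} {X Y I J F F1 F2 H R : Set α} {e q : α}

lemma mRk_bddAbove (M : Matroid α) [M.Finite] (X : Set α) :
    BddAbove {n : ℕ | ∃ I, M.Indep I ∧ I ⊆ X ∧ I.ncard = n} := by
  refine ⟨M.E.ncard, ?_⟩
  rintro n ⟨I, hI, -, rfl⟩
  exact Set.ncard_le_ncard hI.subset_ground M.ground_finite

lemma le_mRk (M : Matroid α) [M.Finite] (hI : M.Indep I) (hIX : I ⊆ X) :
    I.ncard ≤ mRk M X :=
  le_csSup (mRk_bddAbove M X) ⟨I, hI, hIX, rfl⟩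

lemma mRk_le (M : Matroid α) {n : ℕ} {X : Set α}
    (h : ∀ I, M.Indep I → I ⊆ X → I.ncard ≤ n) : mRk M X ≤ n := by
  refine csSup_le ⟨0, ∅, M.empty_indep, empty_subset _, by simp⟩ ?_
  rintro m ⟨I, hI, hIX, rfl⟩
  exact h I hI hIX

lemma basis_mRk_eq (M : Matroid α) [M.Finite] (hI : M.IsBasis I X) : mRk M X = I.ncard := by
  refine le_antisymm (mRk_le M fun J hJ hJX => ?_) (le_mRk M hI.indep hI.subset)
  obtain ⟨J', hJ', hJJ'⟩ := hJ.subset_isBasis_of_subset hJX hI.subset_ground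
  have h1 : J.encard ≤ I.encard := (Set.encard_mono hJJ').trans_eq (hJ'.encard_eq_encard hI)
  have hIfin : I.Finite := M.ground_finite.subset hI.indep.subset_ground
  rw [Set.ncard_def, Set.ncard_def]
  exact ENat.toNat_le_toNat h1 hIfin.encard_lt_top.ne

lemma mRk_restrict (M : Matroid α) (R X : Set α) (hXR : X ⊆ R) :
    mRk (M ↾ R) X = mRk M X := by
  unfold mRk
  congr 1
  ext n
  constructor
  · rintro ⟨I, hI, hIX, rfl⟩; exact ⟨I, (Matroid.restrict_indep_iff.mp hI).1, hIX, rfl⟩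
  · rintro ⟨I, hI, hIX, rfl⟩
    exact ⟨I, Matroid.restrict_indep_iff.mpr ⟨hI, hIX.trans hXR⟩, hIX, rfl⟩

lemma mRk_mono (M : Matroid α) [M.Finite] (hXY : X ⊆ Y) : mRk M X ≤ mRk M Y :=
  mRk_le M fun I hI hIX => le_mRk M hI (hIX.trans hXY)

lemma mRk_closure_eq (M : Matroid α) [M.Finite] (X : Set α) (hX : X ⊆ M.E) :
    mRk M (M.closure X) = mRk M X := by
  obtain ⟨I, hI⟩ := M.exists_isBasis X hX
  rw [basis_mRk_eq M hI.isBasis_closure_right, basis_mRk_eq M hI]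

lemma flat_closure' (M : Matroid α) (X : Set α) : M.IsFlat (M.closure X) := by
  rw [Matroid.closure_def, sInter_eq_iInter]
  haveI : Nonempty {F // F ∈ {F | M.IsFlat F ∧ X ∩ M.E ⊆ F}} :=
    ⟨⟨M.E, M.ground_isFlat, inter_subset_right⟩⟩
  exact Matroid.IsFlat.iInter fun F => F.2.1

lemma restrict_flat_inter_subset (hR : R ⊆ M.E) (hH : (M ↾ R).IsFlat H) :
    M.closure H ∩ R ⊆ H := by
  have hHR : H ⊆ R := by simpa using hH.subset_ground
  have hHE : H ⊆ M.E := hHR.trans hR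
  obtain ⟨I, hI⟩ := M.exists_isBasis H hHE
  rintro x ⟨hxcl, hxR⟩
  have hI' : (M ↾ R).IsBasis I H := (Matroid.isBasis_restrict_iff hR).mpr ⟨hI, hHR⟩
  have hbx : M.IsBasis I (insert x H) := by
    refine hI.indep.isBasis_of_subset_of_subset_closure (hI.subset.trans (subset_insert _ _)) ?_
    rw [hI.closure_eq_closure]
    exact insert_subset hxcl (M.subset_closure H hHE)
  have hx' : (M ↾ R).IsBasis I (insert x H) :=
    (Matroid.isBasis_restrict_iff hR).mpr ⟨hbx, insert_subset hxR hHR⟩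
  exact (hH.subset_of_isBasis_of_isBasis hI' hx') (mem_insert _ _)

lemma mRk_submod (M : Matroid α) [M.Finite] (hX : X ⊆ M.E) (hY : Y ⊆ M.E) :
    mRk M (X ∩ Y) + mRk M (X ∪ Y) ≤ mRk M X + mRk M Y := by
  obtain ⟨I, hI⟩ := M.exists_isBasis (X ∩ Y) (inter_subset_left.trans hX)
  obtain ⟨J, hJ, hIJ⟩ := hI.indep.subset_isBasis_of_subset
    (hI.subset.trans (inter_subset_left.trans subset_union_left)) (union_subset hX hY)
  have hJfin : J.Finite := M.ground_finite.subset hJ.indep.subset_ground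
  have hIeq : J ∩ (X ∩ Y) = I :=
    (hI.eq_of_subset_indep (hJ.indep.subset inter_subset_left)
      (subset_inter hIJ hI.subset) inter_subset_right).symm
  have hXc : (J ∩ X).ncard ≤ mRk M X :=
    le_mRk M (hJ.indep.subset inter_subset_left) inter_subset_right
  have hYc : (J ∩ Y).ncard ≤ mRk M Y :=
    le_mRk M (hJ.indep.subset inter_subset_left) inter_subset_right
  have hun : (J ∩ X) ∪ (J ∩ Y) = J := by
    rw [← inter_union_distrib_left]; exact inter_eq_left.mpr hJ.subset
  have hin : (J ∩ X) ∩ (J ∩ Y) = I := by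
    rw [show (J ∩ X) ∩ (J ∩ Y) = J ∩ (X ∩ Y) by ext x; simp only [mem_inter_iff]; tauto, hIeq]
  have hcard := Set.ncard_union_add_ncard_inter (J ∩ X) (J ∩ Y)
    (hJfin.subset inter_subset_left) (hJfin.subset inter_subset_left)
  rw [hun, hin] at hcard
  rw [basis_mRk_eq M hI, basis_mRk_eq M hJ]
  omega

lemma mRk_insert_ge (M : Matroid α) [M.Finite] (hX : X ⊆ M.E) (hq : q ∈ M.E)
    (hqcl : q ∉ M.closure X) : mRk M X + 1 ≤ mRk M (insert q X) := by
  obtain ⟨I, hI⟩ := M.exists_isBasis X hX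
  have hqI : q ∉ I := fun h => hqcl (M.subset_closure X hX (hI.subset h))
  have hind : M.Indep (insert q I) := by
    rw [Matroid.insert_indep_iff]
    refine ⟨hI.indep, fun _ => ⟨hq, ?_⟩⟩
    rw [hI.closure_eq_closure]
    exact hqcl
  have h1 := le_mRk M hind (insert_subset_insert hI.subset)
  have h2 : (insert q I).ncard = I.ncard + 1 :=
    Set.ncard_insert_of_notMem hqI (M.ground_finite.subset hI.indep.subset_ground)
  rw [basis_mRk_eq M hI]
  omega

end AuxLemmas

/-- For simple matroids `M1, M2` with `E1 ∩ E2 = {p}` and `p` not a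
coloop of either, if `(H1', H2', H3')` is a modular triple of hyperplanes of
`M' = P_p(M1, M2) \ p`, then `(cl_M H1', cl_M H2', cl_M H3')` is a modular triple of
hyperplanes of `M = P_p(M1, M2)`. -/
theorem parallel_connection_closure_modular_triple (M1 M2 M : Matroid α)
    [M1.Finite] [M2.Finite] (E1 E2 : Set α) (p : α)
    (hE1 : M1.E = E1) (hE2 : M2.E = E2) (hp : E1 ∩ E2 = {p})
    (hs1 : MSimple M1) (hs2 : MSimple M2)
    (hc1 : ¬ MColoop M1 p) (hc2 : ¬ MColoop M2 p)
    (hM : IsGPC M1 M2 M) :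
    ∀ H1' H2' H3' : Set α, ModTriple (mDelete M {p}) H1' H2' H3' →
      ModTriple M (M.closure H1') (M.closure H2') (M.closure H3') := by
  
  intro H1' H2' H3' hT
  have hME : M.E = M1.E ∪ M2.E := hM.1
  haveI hMfin : M.Finite := ⟨by rw [hME]; exact M1.ground_finite.union M2.ground_finite⟩
  set R : Set α := M.E \ {p} with hRdef
  have hRE : R ⊆ M.E := diff_subset
  have hT' : ModTriple (M ↾ R) H1' H2' H3' := hT
  have hpm : p ∈ E1 ∩ E2 := by rw [hp]; exact rfl
  have hpE1 : p ∈ M1.E := by rw [hE1]; exact hpm.1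
  have pE : p ∈ M.E := by rw [hME]; exact Or.inl hpE1
  -- Step 1 : p ∈ M.closure R
  have hstep1 : p ∈ M.closure R := by
    have hB : ∃ B, M1.IsBase B ∧ p ∉ B := by
      by_contra h
      push_neg at h
      exact hc1 ⟨hpE1, h⟩
    obtain ⟨B, hB, hpB⟩ := hB
    have hsubE : M1.E \ {p} ⊆ M.E := fun x hx => by rw [hME]; exact Or.inl hx.1
    have hsubR : M1.E \ {p} ⊆ R := fun x hx => ⟨hsubE hx, hx.2⟩
    have hKflat : M.IsFlat (M.closure (M1.E \ {p})) := flat_closure' M _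
    have hKmem : M1.IsFlat (M.closure (M1.E \ {p}) ∩ M1.E) := ((hM.2 _).mp hKflat).2.1
    have hBK : B ⊆ M.closure (M1.E \ {p}) ∩ M1.E :=
      subset_inter ((subset_diff_singleton hB.subset_ground hpB).trans
        (M.subset_closure _ hsubE)) hB.subset_ground
    have h5 : M1.closure B ⊆ M.closure (M1.E \ {p}) ∩ M1.E :=
      (M1.closure_subset_closure hBK).trans hKmem.closure.subset
    have hpB' : p ∈ M1.closure B := by rw [hB.closure_eq]; exact hpE1
    exact M.closure_subset_closure hsubR (h5 hpB').1
  -- Step 2 : rank equalities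
  have hclR : M.closure R = M.E := by
    refine subset_antisymm (M.closure_subset_ground R) fun x hx => ?_
    by_cases hxp : x = p
    · exact hxp ▸ hstep1
    · exact M.subset_closure R hRE ⟨hx, by simpa using hxp⟩
  have hrkR : mRk M R = mRank M := by
    rw [mRank, ← hclR, mRk_closure_eq M R hRE]
  have hrank' : mRank (M ↾ R) = mRank M := by
    have h0 : mRank (M ↾ R) = mRk (M ↾ R) R := rfl
    rw [h0, mRk_restrict M R R Subset.rfl, hrkR]
  -- transfer facts
  have hsubR : ∀ {H' : Set α}, (M ↾ R).IsFlat H' → H' ⊆ R :=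
    fun h => by simpa using h.subset_ground
  have hcap : ∀ {H' : Set α}, (M ↾ R).IsFlat H' → M.closure H' ∩ R = H' := fun {H'} h =>
    subset_antisymm (restrict_flat_inter_subset hRE h)
      (subset_inter (M.subset_closure _ ((hsubR h).trans hRE)) (hsubR h))
  obtain ⟨⟨hF1, hr1⟩, ⟨hF2, hr2⟩, ⟨hF3, hr3⟩, ⟨hFf, hrf⟩, e12, e13, e23⟩ := hT'
  rw [mRk_restrict M R H1' (hsubR hF1), hrank'] at hr1
  rw [mRk_restrict M R H2' (hsubR hF2), hrank'] at hr2
  rw [mRk_restrict M R H3' (hsubR hF3), hrank'] at hr3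
  rw [mRk_restrict M R _ (hsubR hFf), hrank'] at hrf
  have hFE : H1' ∩ H2' ∩ H3' ⊆ M.E := (hsubR hFf).trans hRE
  -- main claim
  have main : ∀ {A B : Set α}, (M ↾ R).IsFlat A → (M ↾ R).IsFlat B →
      A ∩ B = H1' ∩ H2' ∩ H3' → mRk M A + 1 = mRank M → mRk M B + 1 = mRank M →
      M.closure A ∩ M.closure B = M.closure (H1' ∩ H2' ∩ H3') := by
    intro A B hA hB hAB hrA hrB
    have hAR := hsubR hA
    have hBR := hsubR hB
    have hAE : A ⊆ M.E := hAR.trans hRE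
    have hBE : B ⊆ M.E := hBR.trans hRE
    have hFA : H1' ∩ H2' ∩ H3' ⊆ A := by rw [← hAB]; exact inter_subset_left
    have hFB : H1' ∩ H2' ∩ H3' ⊆ B := by rw [← hAB]; exact inter_subset_right
    have hsub1 : M.closure (H1' ∩ H2' ∩ H3') ⊆ M.closure A ∩ M.closure B :=
      subset_inter (M.closure_subset_closure hFA) (M.closure_subset_closure hFB)
    refine subset_antisymm ?_ hsub1
    rintro x ⟨hxA, hxB⟩
    by_cases hxp : x = p
    · rw [hxp] at hxA hxB ⊢
      by_contra hpG
      have hne : ¬ (M.closure B ⊆ M.closure A) := by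
        intro hsub
        have hBA : B ⊆ A := by
          intro y hy
          have hy' : y ∈ M.closure A ∩ R := ⟨hsub (M.subset_closure B hBE hy), hBR hy⟩
          rw [hcap hA] at hy'
          exact hy'
        have hBF : B = H1' ∩ H2' ∩ H3' := by
          rw [← hAB]; exact subset_antisymm (subset_inter hBA Subset.rfl) inter_subset_right
        rw [hBF] at hrB
        omega
      obtain ⟨e, heB, heA⟩ := not_subset.mp hne
      have heE : e ∈ M.E := M.closure_subset_ground B heB
      have hrU : mRank M ≤ mRk M (M.closure A ∪ M.closure B) := by
        have hi := mRk_insert_ge M (M.closure_subset_ground A) heE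
          (by rwa [M.closure_closure A])
        have h3 := mRk_mono M (show insert e (M.closure A) ⊆ M.closure A ∪ M.closure B from
          insert_subset (Or.inr heB) subset_union_left)
        have h4 : mRk M (M.closure A) = mRk M A := mRk_closure_eq M A hAE
        omega
      have hUle : mRk M (M.closure A ∪ M.closure B) ≤ mRank M :=
        mRk_mono M (union_subset (M.closure_subset_ground A) (M.closure_subset_ground B))
      have hsm := mRk_submod M (M.closure_subset_ground A) (M.closure_subset_ground B)
      have hins : insert p (H1' ∩ H2' ∩ H3') ⊆ M.closure A ∩ M.closure B :=
        insert_subset ⟨hxA, hxB⟩ ((M.subset_closure _ hFE).trans hsub1)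
      have hlow := (mRk_insert_ge M hFE pE hpG).trans (mRk_mono M hins)
      have hcA : mRk M (M.closure A) = mRk M A := mRk_closure_eq M A hAE
      have hcB : mRk M (M.closure B) = mRk M B := mRk_closure_eq M B hBE
      omega
    · have hxR : x ∈ R := ⟨M.closure_subset_ground A hxA, by simpa using hxp⟩
      have hA' : x ∈ A := by rw [← hcap hA]; exact ⟨hxA, hxR⟩
      have hB' : x ∈ B := by rw [← hcap hB]; exact ⟨hxB, hxR⟩
      have hxF : x ∈ H1' ∩ H2' ∩ H3' := by rw [← hAB]; exact ⟨hA', hB'⟩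
      exact M.subset_closure _ hFE hxF
  have K12 := main hF1 hF2 e12 hr1 hr2
  have K13 := main hF1 hF3 e13 hr1 hr3
  have K23 := main hF2 hF3 e23 hr2 hr3
  have hG3 : M.closure (H1' ∩ H2' ∩ H3') ⊆ M.closure H3' :=
    M.closure_subset_closure inter_subset_right
  have htr : M.closure H1' ∩ M.closure H2' ∩ M.closure H3' =
      M.closure (H1' ∩ H2' ∩ H3') := by
    rw [K12]; exact inter_eq_left.mpr hG3
  refine ⟨⟨flat_closure' M _, ?_⟩, ⟨flat_closure' M _, ?_⟩, ⟨flat_closure' M _, ?_⟩,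
    ⟨?_, ?_⟩, ?_, ?_, ?_⟩
  · rw [mRk_closure_eq M H1' ((hsubR hF1).trans hRE)]; exact hr1
  · rw [mRk_closure_eq M H2' ((hsubR hF2).trans hRE)]; exact hr2
  · rw [mRk_closure_eq M H3' ((hsubR hF3).trans hRE)]; exact hr3
  · rw [htr]; exact flat_closure' M _
  · rw [htr, mRk_closure_eq M _ hFE]; exact hrf
  · rw [htr]; exact K12
  · rw [htr]; exact K13
  · rw [htr]; exact K23
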